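/- Let k, Δ, d ≥ 2 and let H be built by the 2-step method from the connected (d,Δ)-bipartite graph H0 using the [Δ,k]-transversal design T. Let Q and Q' be distinct blocks of H0 such that there are λ ≥ 1 pairwise internally-disjoint paths in H0 from Q to Q', each of length at most μ. Then for any block B_{Q,V} ∈ B_Q of H and any block B_{Q',V'} ∈ B_{Q'} of H there are min{Δ,k} pairwise internally-disjoint paths in H from B_{Q,V} to B_{Q',V'}, each of length at most μ + 4. -/

import Mathlib

/-- The bipartite graph on `ν ⊕ β` (nodes on the left, blocks on the right)
determined by the adjacency relation `adj`. -/
def bipGraph {ν β : Type} (adj : ν → β → Prop) : SimpleGraph (ν ⊕ β) :=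
  SimpleGraph.fromRel fun u v => ∃ x b, u = Sum.inl x ∧ v = Sum.inr b ∧ adj x b

/-- A `[Δ,k]`-transversal design: the nodes form a set of size `Δ * k` partitioned
into `Δ` groups (the fibres of `group`), each of size `k`; there are `k ^ 2` blocks;
every block is adjacent to exactly one node of each group; and every pair of nodes
lying in distinct groups is adjacent to exactly one common block (the block
*generated* by the pair). -/
structure IsTransversalDesign {ν β : Type} (Δ k : ℕ)
    (group : ν → Fin Δ) (adj : ν → β → Prop) : Prop where
  two_le_k : 2 ≤ k
  two_le_Δ : 2 ≤ Δ
  groupCard : ∀ i : Fin Δ, Nat.card {x : ν // group x = i} = k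
  blockCard : Nat.card β = k ^ 2
  blockMeets : ∀ (b : β) (i : Fin Δ), ∃! x : ν, group x = i ∧ adj x b
  pairGen : ∀ x y : ν, group x ≠ group y → ∃! b : β, adj x b ∧ adj y b

/-- A family of walks (with sources `s i` and destinations `t i`) is pairwise
internally-disjoint if every vertex which is a source or destination of some member
of the family appears on members of the family only as their source or destination,
and every vertex which is not a source or destination of any member of the family
lies on at most one member of the family. -/
def PairwiseInternallyDisjoint {V ι : Type} {G : SimpleGraph V} {s t : ι → V}
    (p : (i : ι) → G.Walk (s i) (t i)) : Prop :=
  (∀ i j : ι, ∀ v : V, v ∈ (p i).support → (v = s j ∨ v = t j) → v = s i ∨ v = t i) ∧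
  (∀ i j : ι, ∀ v : V, (∀ l : ι, v ≠ s l ∧ v ≠ t l) →
    v ∈ (p i).support → v ∈ (p j).support → i = j)

/-- A family of walks is pairwise edge-disjoint if every edge lies on at most one
member of the family. -/
def PairwiseEdgeDisjoint {V ι : Type} {G : SimpleGraph V} {s t : ι → V}
    (p : (i : ι) → G.Walk (s i) (t i)) : Prop :=
  ∀ i j : ι, ∀ e : Sym2 V, e ∈ (p i).edges → e ∈ (p j).edges → i = j

/-- A `(d,Δ)`-bipartite graph: every node has degree `d` and every block has
degree (rank) `Δ`. -/
def IsBipartiteDegRank {ν β : Type} (d Δ : ℕ) (adj : ν → β → Prop) : Prop :=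
  (∀ x : ν, Nat.card {b : β // adj x b} = d) ∧
  (∀ b : β, Nat.card {x : ν // adj x b} = Δ)

/-- The bipartite graph determined by `adj` has line-diameter `l`: the maximum,
over pairs of distinct blocks, of the distance between the two blocks is `l`. -/
def HasLineDiam {ν β : Type} (adj : ν → β → Prop) (l : ℕ) : Prop :=
  (∀ b b' : β, b ≠ b' → (bipGraph adj).dist (Sum.inr b) (Sum.inr b') ≤ l) ∧
  (∃ b b' : β, b ≠ b' ∧ (bipGraph adj).dist (Sum.inr b) (Sum.inr b') = l)

/-- `adjH` describes the bipartite graph `H` built by the 2-step method from the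
bipartite graph `H0` (given by `adj0`) and the `[Δ,k]`-transversal design `T`
(given by `groupT`, `adjT`): the nodes of `H` are the pairs `(p, j)` for `p` a node
of `H0` and `j : Fin k` (so the group `G_p` is `{p} × Fin k`), the blocks of `H`
are the pairs `(Q, b)` for `Q` a block of `H0` and `b` a block of `T` (so the set
`B_Q` is `{Q} × βT`, and such sets are automatically pairwise disjoint, as are the
edge sets of the copies `T_Q`), a node `(p, j)` is adjacent in `H` to a block
`(Q, b)` only if `p` is adjacent to `Q` in `H0`, and for every block `Q` of `H0`
the nodes of the groups `G_p`, for `p` a neighbour of `Q` in `H0`, together with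
the blocks of `B_Q` form a copy `T_Q` of `T` whose `Δ` groups are these groups. -/
structure TwoStep {ν0 β0 νT βT : Type} (Δ k : ℕ)
    (adj0 : ν0 → β0 → Prop) (groupT : νT → Fin Δ) (adjT : νT → βT → Prop)
    (adjH : ν0 × Fin k → β0 × βT → Prop) : Prop where
  td : IsTransversalDesign Δ k groupT adjT
  supp : ∀ (x : ν0 × Fin k) (Q : β0) (b : βT), adjH x (Q, b) → adj0 x.1 Q
  copy : ∀ Q : β0, ∃ (enum : Fin Δ → ν0) (f : νT ≃ {x : ν0 × Fin k // adj0 x.1 Q})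
      (g : βT ≃ βT),
    Function.Injective enum ∧ (∀ i : Fin Δ, adj0 (enum i) Q) ∧
    (∀ q : ν0, adj0 q Q → ∃ i : Fin Δ, enum i = q) ∧
    (∀ x : νT, ((f x : ν0 × Fin k).1 = enum (groupT x))) ∧
    (∀ (x : νT) (b : βT), adjT x b ↔ adjH (f x : ν0 × Fin k) (Q, g b))

/-!
Only one of the paths from `Q` to `Q'` is needed; write it `Q, p₁, A₁, …, p₂, Q'`. Choose
`m = min Δ k` neighbours `E j` of `(Q, V)` and `X j` of `(Q', V')`, in distinct groups. Fixing in
every group `G_y` an injective choice of levels `j ↦ L j y`, the path lifts to `m` walks of `H`,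
the `j`-th one using only the nodes `(y, L j y)` and blocks of `T_A` adjacent to them. These walks
are disjoint: a common block would be adjacent to two nodes of one group, which a transversal
design forbids. Each lift is closed up to a walk from `(Q, V)` to `(Q', V')` through one generated
block of `T_Q` and one of `T_{Q'}`, at a cost of 4 in length, provided `L j` agrees with `E j` and
`X (π j)` on their groups for some pairing `π`. Such a pairing exists unless exactly one entry and
one exit are left unmatched and they lie in the same group at different levels; then the other
entries are already exits, and the remaining one reaches its exit in six steps inside `T_{Q'}`,
detouring through a third group.
-/

section

open Function Finset Sum SimpleGraph

section PartialInjections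

variable {α β : Type*} [Fintype α] [Fintype β]

theorem exists_embedding_extending_of_card_le (hcard : Fintype.card α ≤ Fintype.card β)
    {R : α → β → Prop} (hfun : ∀ a b b', R a b → R a b' → b = b')
    (hinj : ∀ a a' b, R a b → R a' b → a = a') :
    ∃ g : α ↪ β, ∀ a b, R a b → g a = b := by
  classical
  obtain ⟨e₀⟩ := Embedding.nonempty_of_card_le hcard
  let f : α → β := fun a => if h : ∃ b, R a b then h.choose else e₀ a
  have hf : ∀ a b, R a b → f a = b := fun a b hab =>
    (dif_pos ⟨b, hab⟩).trans (hfun _ _ _ (Exists.choose_spec ⟨b, hab⟩) hab)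
  let s : Finset α := univ.filter fun a => ∃ b, R a b
  have hs : Set.InjOn f s := by
    intro a ha a' ha' hfa
    obtain ⟨b, hb⟩ := (mem_filter.mp ha).2
    obtain ⟨b', hb'⟩ := (mem_filter.mp ha').2
    rw [hf a b hb, hf a' b' hb'] at hfa
    exact hinj a a' b hb (hfa ▸ hb')
  obtain ⟨t, hst, -, ht⟩ := exists_subsuperset_card_eq (subset_univ (s.image f))
    (card_image_le.trans (card_le_univ s)) (by rwa [card_univ])
  obtain ⟨g, hg⟩ := exists_equiv_extend_of_card_eq ht.symm hst hs
  refine ⟨g.toEmbedding.trans (Embedding.subtype _), fun a b hab => ?_⟩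
  rw [Embedding.trans_apply, Equiv.coe_toEmbedding, Embedding.subtype_apply,
    hg a (mem_filter.mpr ⟨mem_univ a, b, hab⟩), hf a b hab]

theorem exists_perm_extending {R : α → α → Prop} (hfun : ∀ a b b', R a b → R a b' → b = b')
    (hinj : ∀ a a' b, R a b → R a' b → a = a') :
    ∃ σ : Equiv.Perm α, ∀ a b, R a b → σ a = b := by
  obtain ⟨g, hg⟩ := exists_embedding_extending_of_card_le le_rfl hfun hinj
  exact ⟨Equiv.ofBijective g (Finite.injective_iff_bijective.mp g.injective), hg⟩

end PartialInjections

theorem exists_perm_or_single_clash {ι W C : Type*} [Fintype ι] [DecidableEq ι]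
    (E X : ι → W) (col : W → C) (hE : Injective (col ∘ E)) (hX : Injective (col ∘ X)) :
    (∃ π : Equiv.Perm ι, (∀ j u, E j = X u → π j = u) ∧
      ∀ j, col (E j) = col (X (π j)) → E j = X (π j)) ∨
    ∃ j₀ u₀, col (E j₀) = col (X u₀) ∧ ∀ j ≠ j₀, ∃ u, E j = X u := by
  classical
  obtain ⟨ξ, hξ⟩ := exists_perm_extending (R := fun j u => col (E j) = col (X u))
    (fun _ _ _ h h' => hX (h.symm.trans h')) (fun _ _ _ h h' => hE (h.trans h'.symm))
  -- `ξ` sends each `j` to the `u` with `col (X u) = col (E j)`, if any; precomposed with a cyclic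
  -- permutation `κ` of the unmatched indices, it avoids that `u` unless only one index is unmatched.
  let U : Finset ι := univ.filter fun j => ∀ u, E j ≠ X u
  let κ := U.toList.formPerm
  have hκ : ∀ j ∉ U, κ j = j := fun j hj =>
    List.formPerm_apply_of_notMem (by rwa [mem_toList])
  have hmatched : ∀ j ∉ U, ∃ u, E j = X u := fun j hj => by
    simpa [U] using hj
  by_cases hclash : ∃ j ∈ U, col (E j) = col (X (ξ (κ j)))
  · obtain ⟨j₀, hj₀, hcol⟩ := hclash
    have hfix : κ j₀ = j₀ := ξ.injective ((hξ _ _ hcol).symm)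
    rw [List.formPerm_apply_mem_eq_self_iff _ U.nodup_toList _ (mem_toList.mpr hj₀),
      length_toList] at hfix
    refine Or.inr ⟨j₀, _, hcol, fun j hj => hmatched j fun hjU => hj ?_⟩
    exact card_le_one.mp hfix j hjU j₀ hj₀
  · push Not at hclash
    refine Or.inl ⟨κ.trans ξ, fun j u hju => ?_, fun j hcol => ?_⟩
    · have hj : j ∉ U := fun hjU => (mem_filter.mp hjU).2 u hju
      simp only [Equiv.trans_apply, hκ j hj]
      exact hξ _ _ (congrArg col hju)
    · by_cases hj : j ∈ U
      · exact absurd hcol (hclash j hj)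
      · obtain ⟨u, hu⟩ := hmatched j hj
        simp only [Equiv.trans_apply, hκ j hj, hξ _ _ (congrArg col hu)]
        exact hu

theorem exists_levels {ι ν : Type*} [Fintype ι] {k : ℕ} (hk : Fintype.card ι ≤ k)
    (E X : ι → ν × Fin k) (hE : Injective (Prod.fst ∘ E)) (hX : Injective (Prod.fst ∘ X))
    (hEX : ∀ j u, E j = X u → j = u) (hcol : ∀ j, (E j).1 = (X j).1 → E j = X j) :
    ∃ L : ι → ν → Fin k, (∀ y, Injective fun j => L j y) ∧ (∀ j, L j (E j).1 = (E j).2) ∧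
      ∀ j, L j (X j).1 = (X j).2 := by
  have key : ∀ y, ∃ g : ι ↪ Fin k, ∀ j l, (E j = (y, l) ∨ X j = (y, l)) → g j = l := by
    intro y
    refine exists_embedding_extending_of_card_le (by simpa using hk) ?_ ?_
    · rintro j l l' (h | h) (h' | h')
      · simpa using h.symm.trans h'
      · simpa [h, h'] using hcol j (by simp [h, h'])
      · simpa [h, h'] using (hcol j (by simp [h, h'])).symm
      · simpa using h.symm.trans h'
    · rintro j j' l (h | h) (h' | h')
      · exact hE (by simp [h, h'])
      · exact hEX j j' (h.trans h'.symm)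
      · exact (hEX j' j (h'.trans h.symm)).symm
      · exact hX (by simp [h, h'])
  choose g hg using key
  exact ⟨fun j y => g y j, fun y => (g y).injective, fun j => hg _ j _ (Or.inl rfl),
    fun j => hg _ j _ (Or.inr rfl)⟩

section BipGraph

variable {ν β : Type} {adj : ν → β → Prop} {x y : ν} {b c : β}

@[simp]
theorem bipGraph_adj_inl_inr : (bipGraph adj).Adj (inl x) (inr b) ↔ adj x b := by
  simp [bipGraph]

@[simp]
theorem bipGraph_adj_inr_inl : (bipGraph adj).Adj (inr b) (inl x) ↔ adj x b := by
  simp [bipGraph]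

@[simp]
theorem bipGraph_not_adj_inl_inl : ¬(bipGraph adj).Adj (inl x) (inl y) := by
  simp [bipGraph]

@[simp]
theorem bipGraph_not_adj_inr_inr : ¬(bipGraph adj).Adj (inr b) (inr c) := by
  simp [bipGraph]

end BipGraph

def InteriorsPairwiseDisjoint {V ι : Type} {G : SimpleGraph V} {s t : V}
    (w : ι → G.Walk s t) : Prop :=
  ∀ i j v, v ≠ s → v ≠ t → v ∈ (w i).support → v ∈ (w j).support → i = j

theorem InteriorsPairwiseDisjoint.exists_paths {V ι : Type} {G : SimpleGraph V}
    [DecidableEq V] {s t : V} {w : ι → G.Walk s t} (hw : InteriorsPairwiseDisjoint w) :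
    ∃ p : ι → G.Walk s t, (∀ i, (p i).IsPath ∧ (p i).length ≤ (w i).length) ∧
      PairwiseInternallyDisjoint p :=
  ⟨fun i => (w i).bypass, fun i => ⟨(w i).bypass_isPath, (w i).length_bypass_le_length⟩,
    fun _ _ _ _ hv => hv, fun i j v hv hvi hvj => hw i j v (hv i).1 (hv i).2
      ((w i).support_bypass_subset_support hvi) ((w j).support_bypass_subset_support hvj)⟩

namespace TwoStep

variable {ν0 β0 νT βT : Type} {Δ k : ℕ} {adj0 : ν0 → β0 → Prop} {groupT : νT → Fin Δ}
  {adjT : νT → βT → Prop} {adjH : ν0 × Fin k → β0 × βT → Prop}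
  {A : β0} {y y' : ν0}

theorem eq_of_adj_of_adj (h : TwoStep Δ k adj0 groupT adjT adjH) {j j' : Fin k} {c : βT}
    (hj : adjH (y, j) (A, c)) (hj' : adjH (y, j') (A, c)) : j = j' := by
  obtain ⟨enum, f, g, henum, -, -, hgroup, hiff⟩ := h.copy A
  have hy : adj0 y A := h.supp _ _ _ hj
  have key : ∀ {l : Fin k}, adjH (y, l) (A, c) →
      adjT (f.symm ⟨(y, l), hy⟩) (g.symm c) ∧ enum (groupT (f.symm ⟨(y, l), hy⟩)) = y :=
    fun hl => ⟨by simpa [hiff] using hl, by simpa using (hgroup (f.symm ⟨(y, _), hy⟩)).symm⟩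
  obtain ⟨hx, hgx⟩ := key hj
  obtain ⟨hx', hgx'⟩ := key hj'
  obtain ⟨z, -, hz⟩ := h.td.blockMeets (g.symm c) (groupT (f.symm ⟨(y, j), hy⟩))
  simpa using (hz _ ⟨rfl, hx⟩).trans (hz _ ⟨henum (hgx'.trans hgx.symm), hx'⟩).symm

theorem exists_common_block (h : TwoStep Δ k adj0 groupT adjT adjH) (hy : adj0 y A)
    (hy' : adj0 y' A) (hne : y ≠ y') (j j' : Fin k) :
    ∃ c, adjH (y, j) (A, c) ∧ adjH (y', j') (A, c) := by
  obtain ⟨enum, f, g, -, -, -, hgroup, hiff⟩ := h.copy A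
  have hx := hgroup (f.symm ⟨(y, j), hy⟩)
  have hx' := hgroup (f.symm ⟨(y', j'), hy'⟩)
  simp only [Equiv.apply_symm_apply] at hx hx'
  obtain ⟨b, ⟨hb, hb'⟩, -⟩ := h.td.pairGen _ _ fun he => hne (by rw [hx, hx', he])
  exact ⟨g b, by simpa using (hiff _ b).mp hb, by simpa using (hiff _ b).mp hb'⟩

theorem exists_adj_level (h : TwoStep Δ k adj0 groupT adjT adjH) (c : βT) (hy : adj0 y A) :
    ∃ j, adjH (y, j) (A, c) := by
  obtain ⟨enum, f, g, -, -, hsurj, hgroup, hiff⟩ := h.copy A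
  obtain ⟨i, rfl⟩ := hsurj y hy
  obtain ⟨x, ⟨rfl, hx⟩, -⟩ := h.td.blockMeets (g.symm c) i
  refine ⟨(f x : ν0 × Fin k).2, ?_⟩
  simpa [← hgroup x] using (hiff x _).mp hx

theorem exists_embedding_adj (h : TwoStep Δ k adj0 groupT adjT adjH) (A : β0) :
    ∃ e : Fin Δ ↪ ν0, ∀ i, adj0 (e i) A := by
  obtain ⟨enum, -, -, henum, hadj, -⟩ := h.copy A
  exact ⟨⟨enum, henum⟩, hadj⟩

theorem exists_adj_ne (h : TwoStep Δ k adj0 groupT adjT adjH) (A : β0) (y : ν0) :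
    ∃ z, adj0 z A ∧ z ≠ y := by
  obtain ⟨e, he⟩ := h.exists_embedding_adj A
  have : Nontrivial (Fin Δ) := Fin.nontrivial_iff_two_le.mpr h.td.two_le_Δ
  obtain ⟨i, i', hii'⟩ := exists_pair_ne (Fin Δ)
  by_cases hi : e i = y
  · exact ⟨e i', he i', fun hi' => hii' (e.injective (hi.trans hi'.symm))⟩
  · exact ⟨e i, he i, hi⟩

/-- The sheet of `H` cut out by a level `L y` in every group `G_y`: its nodes are the `(y, L y)`,
and its blocks those `(A, c)` adjacent to the node of their anchor `α A`. -/
def OnSheet (adjH : ν0 × Fin k → β0 × βT → Prop) (L : ν0 → Fin k) (α : β0 → ν0) :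
    (ν0 × Fin k) ⊕ (β0 × βT) → Prop
  | inl x => x.2 = L x.1
  | inr (A, c) => adjH (α A, L (α A)) (A, c)

theorem eq_of_onSheet (h : TwoStep Δ k adj0 groupT adjT adjH) {ι : Type}
    {L : ι → ν0 → Fin k} (hL : ∀ y, Injective fun j => L j y) {α : β0 → ν0}
    {v : (ν0 × Fin k) ⊕ (β0 × βT)} {i j : ι} (hi : OnSheet adjH (L i) α v)
    (hj : OnSheet adjH (L j) α v) : i = j := by
  rcases v with x | ⟨A, c⟩
  · exact hL x.1 (hi.symm.trans hj)
  · exact hL _ (h.eq_of_adj_of_adj hi hj)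

theorem exists_walk_via_block (h : TwoStep Δ k adj0 groupT adjT adjH) (L : ν0 → Fin k)
    (hy : adj0 y A) (hy' : adj0 y' A) :
    ∃ w : (bipGraph adjH).Walk (inl (y, L y)) (inl (y', L y')), w.length ≤ 2 ∧
      ∀ v ∈ w.support, v = inl (y, L y) ∨ v = inl (y', L y') ∨
        ∃ c, v = inr (A, c) ∧ adjH (y, L y) (A, c) ∧ adjH (y', L y') (A, c) := by
  by_cases hyy : y = y'
  · subst hyy
    exact ⟨.nil, by simp, by simp⟩
  obtain ⟨c, hc, hc'⟩ := h.exists_common_block hy hy' hyy (L y) (L y')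
  refine ⟨.cons (bipGraph_adj_inl_inr.mpr hc) (.cons (bipGraph_adj_inr_inl.mpr hc') .nil),
    by simp, ?_⟩
  simp only [Walk.support_cons, Walk.support_nil, List.mem_cons, List.not_mem_nil, or_false]
  rintro v (rfl | rfl | rfl)
  exacts [Or.inl rfl, Or.inr (Or.inr ⟨c, rfl, hc, hc'⟩), Or.inr (Or.inl rfl)]

open Classical in
/-- The anchor of each block of `W` is the node preceding it on `W`. -/
theorem exists_lift (h : TwoStep Δ k adj0 groupT adjT adjH) {B : β0} (α₀ : β0 → ν0) :
    ∀ {a : ν0} (W : (bipGraph adj0).Walk (inl a) (inr B)), W.IsPath →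
      ∃ b α, adj0 b B ∧ α B = b ∧ (∀ A, inr A ∉ W.support → α A = α₀ A) ∧
        ∀ L : ν0 → Fin k, ∃ w : (bipGraph adjH).Walk (inl (a, L a)) (inl (b, L b)),
          w.length + 1 ≤ W.length ∧ ∀ v ∈ w.support, OnSheet adjH L α v
  | a, .cons hA .nil, _ => by
    refine ⟨a, Function.update α₀ B a, bipGraph_adj_inl_inr.mp hA, by simp, fun A' hA' => ?_,
      fun L => ⟨.nil, by simp, by simp [OnSheet]⟩⟩
    exact Function.update_of_ne (by simpa using hA') _ _
  | a, .cons (v := inr A) hA (.cons (v := inl y) hAy rest), hW => by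
    rw [Walk.cons_isPath_iff, Walk.cons_isPath_iff, Walk.support_cons] at hW
    obtain ⟨⟨hrest, hArest⟩, haW⟩ := hW
    have hay : a ≠ y := fun hay => haW (List.mem_cons_of_mem _ (by simp [hay]))
    obtain ⟨b, α, hbB, hαB, hα, hlift⟩ := exists_lift h (Function.update α₀ A a) rest hrest
    refine ⟨b, α, hbB, hαB, fun A' hA' => ?_, fun L => ?_⟩
    · simp only [Walk.support_cons, List.mem_cons, not_or] at hA'
      rw [hα A' hA'.2.2, Function.update_of_ne (by simpa using hA'.2.1)]
    obtain ⟨w, hw, hwL⟩ := hlift L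
    obtain ⟨s, hs, hsL⟩ := h.exists_walk_via_block L (bipGraph_adj_inl_inr.mp hA)
      (bipGraph_adj_inr_inl.mp hAy)
    have hαA : α A = a := by rw [hα A hArest, Function.update_self]
    refine ⟨s.append w, by simp only [Walk.length_append, Walk.length_cons]; omega,
      fun v hv => ?_⟩
    rcases (Walk.mem_support_append_iff _ _).mp hv with hv | hv
    · rcases hsL v hv with rfl | rfl | ⟨c, rfl, hc, -⟩
      · rfl
      · rfl
      · simpa [OnSheet, hαA] using hc
    · exact hwL v hv
  | _, .cons (v := inl _) hA _, _ => absurd hA bipGraph_not_adj_inl_inl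
  | _, .cons (v := inr _) _ (.cons (v := inr _) hA _), _ => absurd hA bipGraph_not_adj_inr_inr

theorem exists_walk_onSheet (h : TwoStep Δ k adj0 groupT adjT adjH) {Q Q' : β0} {V V' : βT}
    {p₁ p₂ e x : ν0} {L : ν0 → Fin k} {α : β0 → ν0} (hαQ : α Q = p₁) (hαQ' : α Q' = p₂)
    (hp₁ : adj0 p₁ Q) (hp₂ : adj0 p₂ Q')
    (c : (bipGraph adjH).Walk (inl (p₁, L p₁)) (inl (p₂, L p₂)))
    (hc : ∀ v ∈ c.support, OnSheet adjH L α v) (he : adjH (e, L e) (Q, V))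
    (hx : adjH (x, L x) (Q', V')) :
    ∃ w : (bipGraph adjH).Walk (inr (Q, V)) (inr (Q', V')), w.length ≤ c.length + 6 ∧
      ∀ v ∈ w.support, v = inr (Q, V) ∨ v = inr (Q', V') ∨ OnSheet adjH L α v := by
  obtain ⟨s, hs, hsL⟩ := h.exists_walk_via_block L (h.supp _ _ _ he) hp₁
  obtain ⟨t, ht, htL⟩ := h.exists_walk_via_block L hp₂ (h.supp _ _ _ hx)
  refine ⟨.cons (bipGraph_adj_inr_inl.mpr he)
    ((s.append (c.append t)).concat (bipGraph_adj_inl_inr.mpr hx)), ?_, fun v hv => ?_⟩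
  · simp only [Walk.length_cons, Walk.length_concat, Walk.length_append]
    omega
  simp only [Walk.support_cons, Walk.support_concat, List.mem_cons, List.mem_append,
    Walk.mem_support_append_iff, List.not_mem_nil, or_false] at hv
  rcases hv with rfl | ((hv | hv | hv) | rfl)
  · exact Or.inl rfl
  · rcases hsL v hv with rfl | rfl | ⟨d, rfl, -, hd⟩
    · exact Or.inr (Or.inr rfl)
    · exact Or.inr (Or.inr rfl)
    · exact Or.inr (Or.inr (by simpa [OnSheet, hαQ] using hd))
  · exact Or.inr (Or.inr (hc v hv))
  · rcases htL v hv with rfl | rfl | ⟨d, rfl, hd, -⟩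
    · exact Or.inr (Or.inr rfl)
    · exact Or.inr (Or.inr rfl)
    · exact Or.inr (Or.inr (by simpa [OnSheet, hαQ'] using hd))
  · exact Or.inr (Or.inl rfl)

theorem exists_walks_onSheet (h : TwoStep Δ k adj0 groupT adjT adjH) {ι : Type} {Q Q' : β0}
    {V V' : βT} {p₁ p₂ : ν0} {α : β0 → ν0} (hαQ : α Q = p₁) (hαQ' : α Q' = p₂)
    (hp₁ : adj0 p₁ Q) (hp₂ : adj0 p₂ Q') {n : ℕ}
    (hlift : ∀ L : ν0 → Fin k, ∃ c : (bipGraph adjH).Walk (inl (p₁, L p₁)) (inl (p₂, L p₂)),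
      c.length + 1 ≤ n ∧ ∀ v ∈ c.support, OnSheet adjH L α v)
    {L : ι → ν0 → Fin k} (hL : ∀ y, Injective fun j => L j y) {e x : ι → ν0}
    (he : ∀ j, adjH (e j, L j (e j)) (Q, V)) (hx : ∀ j, adjH (x j, L j (x j)) (Q', V')) :
    ∃ w : ι → (bipGraph adjH).Walk (inr (Q, V)) (inr (Q', V')),
      (∀ j, (w j).length ≤ n + 5) ∧ InteriorsPairwiseDisjoint w := by
  have hwalk : ∀ j, ∃ w : (bipGraph adjH).Walk (inr (Q, V)) (inr (Q', V')), w.length ≤ n + 5 ∧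
      ∀ v ∈ w.support, v = inr (Q, V) ∨ v = inr (Q', V') ∨ OnSheet adjH (L j) α v := by
    intro j
    obtain ⟨c, hc, hcL⟩ := hlift (L j)
    obtain ⟨w, hw, hwL⟩ := h.exists_walk_onSheet hαQ hαQ' hp₁ hp₂ c hcL (he j) (hx j)
    exact ⟨w, by omega, hwL⟩
  choose w hw hwL using hwalk
  refine ⟨w, hw, fun i j v hvs hvt hi hj => ?_⟩
  obtain hi | hi | hi := hwL i v hi
  · exact absurd hi hvs
  · exact absurd hi hvt
  obtain hj | hj | hj := hwL j v hj
  · exact absurd hj hvs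
  · exact absurd hj hvt
  exact h.eq_of_onSheet hL hi hj

theorem exists_detour (h : TwoStep Δ k adj0 groupT adjT adjH) {Q' : β0} {V' : βT} {y₀ : ν0}
    (hy₀ : adj0 y₀ Q') (s s' : Fin k) :
    ∃ w : (bipGraph adjH).Walk (inl (y₀, s)) (inl (y₀, s')), w.length ≤ 4 ∧
      ∀ v ∈ w.support, v = inl (y₀, s) ∨ v = inl (y₀, s') ∨ (∃ d, v = inr (Q', d)) ∨
        ∃ u, v = inl u ∧ ¬adjH u (Q', V') := by
  obtain ⟨z, hz, hzy⟩ := h.exists_adj_ne Q' y₀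
  obtain ⟨l, hl⟩ := h.exists_adj_level V' hz
  have : Nontrivial (Fin k) := Fin.nontrivial_iff_two_le.mpr h.td.two_le_k
  obtain ⟨c, hc⟩ := exists_ne l
  obtain ⟨d₁, hd₁, hd₁'⟩ := h.exists_common_block hy₀ hz hzy.symm s c
  obtain ⟨d₂, hd₂, hd₂'⟩ := h.exists_common_block hz hy₀ hzy c s'
  refine ⟨.cons (bipGraph_adj_inl_inr.mpr hd₁) (.cons (bipGraph_adj_inr_inl.mpr hd₁')
    (.cons (bipGraph_adj_inl_inr.mpr hd₂) (.cons (bipGraph_adj_inr_inl.mpr hd₂') .nil))),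
    by simp, ?_⟩
  simp only [Walk.support_cons, Walk.support_nil, List.mem_cons, List.not_mem_nil, or_false]
  rintro v (rfl | rfl | rfl | rfl | rfl)
  exacts [Or.inl rfl, Or.inr (Or.inr (Or.inl ⟨d₁, rfl⟩)),
    Or.inr (Or.inr (Or.inr ⟨_, rfl, fun hzc => hc (h.eq_of_adj_of_adj hzc hl)⟩)),
    Or.inr (Or.inr (Or.inl ⟨d₂, rfl⟩)), Or.inr (Or.inl rfl)]

theorem exists_walks_of_clash (h : TwoStep Δ k adj0 groupT adjT adjH) {ι : Type}
    [DecidableEq ι] {Q Q' : β0} {V V' : βT} (E : ι → ν0 × Fin k) (hE : ∀ j, adjH (E j) (Q, V))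
    (hEcol : Injective (Prod.fst ∘ E)) (j₀ : ι) (hE' : ∀ j ≠ j₀, adjH (E j) (Q', V'))
    {x : ν0 × Fin k} (hx : adjH x (Q', V')) (hxcol : x.1 = (E j₀).1) :
    ∃ w : ι → (bipGraph adjH).Walk (inr (Q, V)) (inr (Q', V')),
      (∀ j, (w j).length ≤ 6) ∧ InteriorsPairwiseDisjoint w := by
  obtain ⟨x₁, x₂⟩ := x
  obtain rfl : x₁ = (E j₀).1 := hxcol
  obtain ⟨d, hd, hdV'⟩ := h.exists_detour (V' := V') (h.supp (_, x₂) _ _ hx) (E j₀).2 x₂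
  let long : (bipGraph adjH).Walk (inr (Q, V)) (inr (Q', V')) :=
    .cons (bipGraph_adj_inr_inl.mpr (hE j₀)) (d.concat (bipGraph_adj_inl_inr.mpr hx))
  have hlong : ∀ j ≠ j₀, inl (E j) ∉ long.support := by
    intro j hj hmem
    simp only [long, Walk.support_cons, Walk.support_concat, List.mem_cons, List.mem_append,
      List.not_mem_nil, reduceCtorEq, false_or, or_false] at hmem
    rcases hdV' _ hmem with hEj | hEj | ⟨_, hEj⟩ | ⟨u, hEj, hu⟩
    · exact hj (hEcol (by simp [inl.inj hEj]))
    · exact hj (hEcol (by simp [inl.inj hEj]))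
    · exact inl_ne_inr hEj
    · exact hu (inl.inj hEj ▸ hE' j hj)
  let w : ι → (bipGraph adjH).Walk (inr (Q, V)) (inr (Q', V')) := fun j =>
    if hj : j = j₀ then long else
      .cons (bipGraph_adj_inr_inl.mpr (hE j)) (.cons (bipGraph_adj_inl_inr.mpr (hE' j hj)) .nil)
  have hshort : ∀ j ≠ j₀, ∀ v ∈ (w j).support, v ≠ inr (Q, V) → v ≠ inr (Q', V') →
      v = inl (E j) := by
    intro j hj v hv hvs hvt
    simp only [w, dif_neg hj, Walk.support_cons, Walk.support_nil, List.mem_cons,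
      List.not_mem_nil, or_false] at hv
    tauto
  refine ⟨w, fun j => ?_, fun i j v hvs hvt hi hj => ?_⟩
  · by_cases hj : j = j₀
    · simp only [w, hj, dite_true, long, Walk.length_cons, Walk.length_concat]
      omega
    · simp [w, hj]
  by_contra hij
  by_cases hi₀ : i = j₀ <;> by_cases hj₀ : j = j₀
  · exact hij (hi₀.trans hj₀.symm)
  · simp only [w, hi₀, dite_true] at hi
    exact hlong j hj₀ (hshort j hj₀ v hj hvs hvt ▸ hi)
  · simp only [w, hj₀, dite_true] at hj
    exact hlong i hi₀ (hshort i hi₀ v hi hvs hvt ▸ hj)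
  · exact hij (hEcol (congrArg Prod.fst
      (inl.inj ((hshort i hi₀ v hi hvs hvt).symm.trans (hshort j hj₀ v hj hvs hvt)))))

theorem exists_walks_of_isPath (h : TwoStep Δ k adj0 groupT adjT adjH) {Q Q' : β0} (hQQ : Q ≠ Q')
    (q : (bipGraph adj0).Walk (inr Q) (inr Q')) (hq : q.IsPath) (V V' : βT) :
    ∃ w : Fin (min Δ k) → (bipGraph adjH).Walk (inr (Q, V)) (inr (Q', V')),
      (∀ j, (w j).length ≤ q.length + 4) ∧ InteriorsPairwiseDisjoint w := by
  classical
  obtain ⟨p₁ | _, hQp₁, W, rfl⟩ := q.exists_eq_cons_of_ne (by simpa using hQQ)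
  swap
  · exact absurd hQp₁ bipGraph_not_adj_inr_inr
  have hp₁ : adj0 p₁ Q := bipGraph_adj_inr_inl.mp hQp₁
  rw [Walk.cons_isPath_iff] at hq
  obtain ⟨p₂, α, hp₂, hαQ', hα, hlift⟩ := h.exists_lift (fun _ => p₁) W hq.1
  have hαQ : α Q = p₁ := hα Q hq.2
  obtain ⟨ρ, hρ⟩ := h.exists_embedding_adj Q
  obtain ⟨ρ', hρ'⟩ := h.exists_embedding_adj Q'
  let cast := Fin.castLEEmb (min_le_left Δ k)
  choose a ha using fun j => h.exists_adj_level V (hρ (cast j))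
  choose b hb using fun j => h.exists_adj_level V' (hρ' (cast j))
  let E : Fin (min Δ k) → ν0 × Fin k := fun j => (ρ (cast j), a j)
  let X : Fin (min Δ k) → ν0 × Fin k := fun j => (ρ' (cast j), b j)
  have hEcol : Injective (Prod.fst ∘ E) := (cast.trans ρ).injective
  have hXcol : Injective (Prod.fst ∘ X) := (cast.trans ρ').injective
  rcases exists_perm_or_single_clash E X Prod.fst hEcol hXcol with
    ⟨π, hπ, hπcol⟩ | ⟨j₀, u₀, hcol, hmatched⟩
  · obtain ⟨L, hL, hLE, hLX⟩ := exists_levels (by simp) E (X ∘ π) hEcol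
      (hXcol.comp π.injective) (fun j u h => π.injective (hπ j (π u) h)) hπcol
    obtain ⟨w, hw, hwd⟩ := h.exists_walks_onSheet hαQ hαQ' hp₁ hp₂ hlift hL
      (e := fun j => (E j).1) (x := fun j => (X (π j)).1) (fun j => by rw [hLE j]; exact ha j)
      (fun j => by rw [show L j (X (π j)).1 = _ from hLX j]; exact hb (π j))
    exact ⟨w, fun j => by rw [Walk.length_cons]; exact hw j, hwd⟩
  · have hW : W.length ≠ 0 := fun hW => by simpa using Walk.eq_of_length_eq_zero hW
    obtain ⟨w, hw, hwd⟩ := h.exists_walks_of_clash E ha hEcol j₀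
      (fun j hj => by obtain ⟨u, hu⟩ := hmatched j hj; exact hu ▸ hb u) (hb u₀) hcol.symm
    exact ⟨w, fun j => by have := hw j; rw [Walk.length_cons]; omega, hwd⟩

end TwoStep

end

theorem twoStep_one_to_one_min_general {ν0 β0 νT βT : Type} (Δ k lam μ : ℕ)
    (adj0 : ν0 → β0 → Prop) (groupT : νT → Fin Δ) (adjT : νT → βT → Prop)
    (adjH : ν0 × Fin k → β0 × βT → Prop)
    (h2 : TwoStep Δ k adj0 groupT adjT adjH)
    (Q Q' : β0) (hQQ : Q ≠ Q') (hlam : 1 ≤ lam)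
    (q : Fin lam → (bipGraph adj0).Walk (Sum.inr Q) (Sum.inr Q'))
    (hq : ∀ i : Fin lam, (q i).IsPath ∧ (q i).length ≤ μ)
    (V V' : βT) :
    ∃ p : Fin (min Δ k) →
        (bipGraph adjH).Walk (Sum.inr (Q, V)) (Sum.inr (Q', V')),
      (∀ i, (p i).IsPath ∧ (p i).length ≤ μ + 4) ∧
      PairwiseInternallyDisjoint p := by
  classical
  obtain ⟨hpath, hlen⟩ := hq ⟨0, hlam⟩
  obtain ⟨w, hw, hwd⟩ := h2.exists_walks_of_isPath hQQ (q ⟨0, hlam⟩) hpath V V'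
  obtain ⟨p, hp, hpd⟩ := hwd.exists_paths
  exact ⟨p, fun i => ⟨(hp i).1, by linarith [(hp i).2, hw i]⟩, hpd⟩

/-- Let `k, Δ, d ≥ 2` and let `H` (given by `adjH`) be built by the
2-step method from the connected `(d,Δ)`-bipartite graph `H0` using the
`[Δ,k]`-transversal design `T`.  Let `Q` and `Q'` be distinct blocks of `H0` joined
by `lam ≥ 1` pairwise internally-disjoint paths, each of length at most `μ`.  Then
for any blocks `(Q, V) ∈ B_Q` and `(Q', V') ∈ B_{Q'}` of `H` there are `min Δ k`
pairwise internally-disjoint paths in `H` from `(Q, V)` to `(Q', V')`, each of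
length at most `μ + 4`. -/
theorem twoStep_one_to_one_min {ν0 β0 νT βT : Type} (d Δ k lam μ : ℕ)
    (hd : 2 ≤ d) (hΔ : 2 ≤ Δ) (hk : 2 ≤ k)
    (adj0 : ν0 → β0 → Prop) (groupT : νT → Fin Δ) (adjT : νT → βT → Prop)
    (adjH : ν0 × Fin k → β0 × βT → Prop)
    (hH0 : IsBipartiteDegRank d Δ adj0)
    (hconn : (bipGraph adj0).Connected)
    (h2 : TwoStep Δ k adj0 groupT adjT adjH)
    (Q Q' : β0) (hQQ : Q ≠ Q') (hlam : 1 ≤ lam)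
    (q : Fin lam → (bipGraph adj0).Walk (Sum.inr Q) (Sum.inr Q'))
    (hq : ∀ i : Fin lam, (q i).IsPath ∧ (q i).length ≤ μ)
    (hqd : PairwiseInternallyDisjoint q)
    (V V' : βT) :
    ∃ p : Fin (min Δ k) →
        (bipGraph adjH).Walk (Sum.inr (Q, V)) (Sum.inr (Q', V')),
      (∀ i, (p i).IsPath ∧ (p i).length ≤ μ + 4) ∧
      PairwiseInternallyDisjoint p :=
  twoStep_one_to_one_min_general Δ k lam μ adj0 groupT adjT adjH h2 Q Q' hQQ hlam q hq V V'
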